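/- arXiv:2012.00707 — 2 statements merged into one kernel-verified Lean document; each statement's English description precedes it below -/
import Mathlib

section
/- Under the hypotheses that ‖f‖_{B_{p,q₀}} < ∞ for some p ≥ 1 and q₀ > 0, one has liminf_{q→∞} ‖f‖_{B_{p,q}} ≥ ‖f‖_∞ (where both sides may be infinite). -/
open MeasureTheory Filter Real Topology ENNReal

noncomputable def e0 : ℝ := Real.exp 1 - 1

noncomputable def Bpq (p q t : ℝ) : ℝ := t ^ p * (Real.log (e0 + t)) ^ q

noncomputable def BpqBar (p q t : ℝ) : ℝ := t ^ p * (Real.log (Real.exp 1 + t)) ^ q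

/-- The Luxemburg norm of `f` with respect to the Young function `A`. -/
noncomputable def luxNorm {X : Type*} [MeasurableSpace X] (μ : Measure X)
    (A : ℝ → ℝ) (f : X → ℝ) : ℝ≥0∞ :=
  sInf {lam : ℝ≥0∞ | 0 < lam ∧ lam ≠ ∞ ∧
    ∫⁻ x, ENNReal.ofReal (A (|f x| / lam.toReal)) ∂μ ≤ 1}

/-- `A` is a Young function: continuous, convex, increasing on `[0,∞)`,
`A 0 = 0` and `A t / t → ∞`. -/
def IsYoung (A : ℝ → ℝ) : Prop :=
  ContinuousOn A (Set.Ici 0) ∧ ConvexOn ℝ (Set.Ici 0) A ∧ MonotoneOn A (Set.Ici 0) ∧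
    A 0 = 0 ∧ Tendsto (fun t => A t / t) atTop atTop

/-!
For `0 < b < a < ‖f‖_∞` the set `{|f| > a}` has positive measure, and on it `|f| / λ ≥ a / b`
for every scale `λ < b`. Hence the `B_{p,q}`-modular of `f / λ` is at least
`log (e₀ + a / b) ^ q` times that measure, which exceeds `1` once `q` is large because
`log (e₀ + a / b) > 1`. So `‖f‖_{B_{p,q}} ≥ b` for all large `q`.
-/

open scoped NNReal

lemma e0_pos : 0 < e0 := by
  unfold e0
  linarith [Real.add_one_lt_exp one_ne_zero]

lemma one_lt_log_e0_add {r : ℝ} (hr : 1 < r) : 1 < Real.log (e0 + r) := by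
  rw [Real.lt_log_iff_exp_lt (by linarith [e0_pos]), e0]
  linarith

lemma rpow_log_e0_add_le_Bpq {p q r t : ℝ} (hp : 0 ≤ p) (hq : 0 ≤ q) (hr : 1 ≤ r)
    (hrt : r ≤ t) : Real.log (e0 + r) ^ q ≤ Bpq p q t := by
  have hlog_nonneg : 0 ≤ Real.log (e0 + r) := Real.log_nonneg (by linarith [e0_pos])
  have hlog_mono : Real.log (e0 + r) ≤ Real.log (e0 + t) :=
    Real.log_le_log (by linarith [e0_pos]) (by linarith)
  calc Real.log (e0 + r) ^ q = 1 * Real.log (e0 + r) ^ q := (one_mul _).symm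
    _ ≤ t ^ p * Real.log (e0 + t) ^ q := by
      gcongr
      · exact Real.rpow_nonneg (by linarith) p
      · exact Real.one_le_rpow (hr.trans hrt) hp

lemma ofReal_mul_measure_le_lintegral_Bpq {X : Type*} [MeasurableSpace X] (μ : Measure X)
    {f : X → ℝ} (hf : Measurable f) {p q r s a : ℝ} (hp : 0 ≤ p) (hq : 0 ≤ q) (hr : 1 ≤ r)
    (hs : 0 < s) (hrs : r * s ≤ a) :
    ENNReal.ofReal (Real.log (e0 + r) ^ q) * μ {x | a < |f x|} ≤
      ∫⁻ x, ENNReal.ofReal (Bpq p q (|f x| / s)) ∂μ := by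
  rw [← setLIntegral_const]
  refine (setLIntegral_mono' (measurableSet_lt measurable_const hf.abs) fun x hx => ?_).trans
    (setLIntegral_le_lintegral _ _)
  refine ENNReal.ofReal_le_ofReal (rpow_log_e0_add_le_Bpq hp hq hr ?_)
  rw [le_div_iff₀ hs]
  exact hrs.trans hx.le

lemma le_luxNorm_of_forall_lt {X : Type*} [MeasurableSpace X] (μ : Measure X) (A : ℝ → ℝ)
    (f : X → ℝ) {c : ℝ≥0∞}
    (h : ∀ lam : ℝ≥0∞, 0 < lam → lam < c →
      1 < ∫⁻ x, ENNReal.ofReal (A (|f x| / lam.toReal)) ∂μ) :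
    c ≤ luxNorm μ A f := by
  refine le_sInf fun lam ⟨hlam_pos, _, hlam_int⟩ => ?_
  by_contra! hlt
  exact (h lam hlam_pos hlt).not_ge hlam_int

lemma measure_lt_abs_ne_zero_of_lt_eLpNormEssSup {X : Type*} [MeasurableSpace X]
    {μ : Measure X} {f : X → ℝ} {a : ℝ≥0} (ha : (a : ℝ≥0∞) < eLpNormEssSup f μ) :
    μ {x | (a : ℝ) < |f x|} ≠ 0 := by
  intro h
  have hbound : ∀ᵐ x ∂μ, ‖f x‖ ≤ a := by
    rw [ae_iff]
    simpa only [Real.norm_eq_abs, not_le] using h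
  exact ha.not_ge (by simpa using eLpNormEssSup_le_of_ae_bound hbound)

lemma eventually_le_luxNorm_Bpq {X : Type*} [MeasurableSpace X] (μ : Measure X)
    {f : X → ℝ} (hf : Measurable f) {p : ℝ} (hp : 0 ≤ p) {a b : ℝ≥0} (hb : 0 < b)
    (hba : b < a) (hμ : μ {x | (a : ℝ) < |f x|} ≠ 0) :
    ∀ᶠ q : ℝ in atTop, (b : ℝ≥0∞) ≤ luxNorm μ (Bpq p q) f := by
  set r : ℝ := a / b
  have hr : 1 < r := (one_lt_div (by exact_mod_cast hb)).2 (by exact_mod_cast hba)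
  set M := Real.log (e0 + r)
  have hM : 1 < M := one_lt_log_e0_add hr
  have htop : Tendsto (fun q : ℝ => ENNReal.ofReal (M ^ q) * μ {x | (a : ℝ) < |f x|})
      atTop (𝓝 ∞) := by
    simpa [ENNReal.top_mul hμ] using
      ENNReal.Tendsto.mul_const (b := μ {x | (a : ℝ) < |f x|})
        (ENNReal.tendsto_ofReal_atTop.comp (tendsto_rpow_atTop_of_base_gt_one M hM))
        (Or.inl ENNReal.top_ne_zero)
  filter_upwards [htop.eventually (eventually_gt_nhds ENNReal.one_lt_top),
    eventually_ge_atTop 0] with q hq_large hq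
  refine le_luxNorm_of_forall_lt μ _ f fun lam hlam_pos hlam_lt => hq_large.trans_le ?_
  have hlam_top : lam ≠ ∞ := ne_top_of_lt hlam_lt
  have hlam_le : lam.toReal ≤ b := by
    simpa using ENNReal.toReal_mono ENNReal.coe_ne_top hlam_lt.le
  refine ofReal_mul_measure_le_lintegral_Bpq μ hf hp hq hr.le
    (ENNReal.toReal_pos hlam_pos.ne' hlam_top) ?_
  calc r * lam.toReal ≤ r * b := by gcongr
    _ = a := div_mul_cancel₀ _ (by exact_mod_cast hb.ne')

theorem stmt1_general {X : Type*} [MeasurableSpace X] (μ : Measure X) (f : X → ℝ)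
    (hf : Measurable f) (p : ℝ) (hp : 1 ≤ p) :
    eLpNormEssSup f μ ≤ Filter.liminf (fun q : ℝ => luxNorm μ (Bpq p q) f) atTop := by
  refine ENNReal.le_of_forall_pos_nnreal_lt fun b hb hb_lt => ?_
  obtain ⟨a, hba, ha⟩ := ENNReal.lt_iff_exists_nnreal_btwn.1 hb_lt
  exact le_liminf_of_le (by isBoundedDefault)
    (eventually_le_luxNorm_Bpq μ hf (by linarith) hb (by exact_mod_cast hba)
      (measure_lt_abs_ne_zero_of_lt_eLpNormEssSup ha))

theorem stmt1 {X : Type*} [MeasurableSpace X] (μ : Measure X) (f : X → ℝ)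
    (hf : Measurable f) (p q₀ : ℝ) (hp : 1 ≤ p) (hq₀ : 0 < q₀)
    (hfin : luxNorm μ (Bpq p q₀) f < ∞) :
    eLpNormEssSup f μ ≤ Filter.liminf (fun q : ℝ => luxNorm μ (Bpq p q) f) atTop :=
  stmt1_general μ f hf p hp
end

section
/- Under the hypotheses that 0 < ‖f‖_∞ < ∞ and ‖f‖_{B_{p,q₀}} < ∞ for some p ≥ 1 and q₀ > 0, one has limsup_{q→∞} ‖f‖_{B_{p,q}} ≤ ‖f‖_∞. -/
open MeasureTheory Filter Real Topology ENNReal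

lemma e0_gt_one : 1 < e0 := by
  have := Real.exp_one_gt_d9
  unfold e0; linarith

lemma Bpq_key {p q₀ q t t' c K : ℝ} (hp : 0 ≤ p) (hq₀ : 0 ≤ q₀) (hqq : q₀ ≤ q)
    (ht : 0 ≤ t) (ht' : 0 ≤ t') (hK : 1 ≤ K) (htt' : t ≤ K * t')
    (hlc : Real.log (e0 + t) ≤ c) :
    Bpq p q t ≤ (K ^ p * (1 + Real.log K / Real.log e0) ^ q₀ * c ^ (q - q₀)) *
      Bpq p q₀ t' := by
  have he0 : 1 < e0 := e0_gt_one
  have hc0 : 0 < Real.log e0 := Real.log_pos he0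
  set c0 := Real.log e0 with hc0def
  set l := Real.log (e0 + t) with hl_def
  set l' := Real.log (e0 + t') with hl'_def
  set D := 1 + Real.log K / c0 with hD_def
  have hKpos : 0 < K := lt_of_lt_of_le one_pos hK
  have hlogK : 0 ≤ Real.log K := Real.log_nonneg hK
  have hl_lb : c0 ≤ l := Real.log_le_log (by linarith) (by linarith)
  have hl'_lb : c0 ≤ l' := Real.log_le_log (by linarith) (by linarith)
  have hlpos : 0 < l := lt_of_lt_of_le hc0 hl_lb
  have hl'pos : 0 < l' := lt_of_lt_of_le hc0 hl'_lb
  have hD1 : 1 ≤ D := by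
    rw [hD_def]
    have : 0 ≤ Real.log K / c0 := div_nonneg hlogK hc0.le
    linarith
  -- l ≤ D * l'
  have hlD : l ≤ D * l' := by
    have h1 : l ≤ Real.log (K * (e0 + t')) := by
      apply Real.log_le_log (by linarith)
      nlinarith
    have h2 : Real.log (K * (e0 + t')) = Real.log K + l' :=
      Real.log_mul (ne_of_gt hKpos) (by positivity)
    have h3 : Real.log K ≤ (Real.log K / c0) * l' := by
      have := mul_le_mul_of_nonneg_left hl'_lb (div_nonneg hlogK hc0.le)
      calc Real.log K = (Real.log K / c0) * c0 := by field_simp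
        _ ≤ (Real.log K / c0) * l' := this
    calc l ≤ Real.log K + l' := h2 ▸ h1
      _ ≤ (Real.log K / c0) * l' + l' := by linarith
      _ = D * l' := by ring
  have h1 : t ^ p ≤ K ^ p * t' ^ p := by
    calc t ^ p ≤ (K * t') ^ p := Real.rpow_le_rpow ht htt' hp
      _ = K ^ p * t' ^ p := Real.mul_rpow hKpos.le ht'
  have h2 : l ^ q₀ ≤ D ^ q₀ * l' ^ q₀ := by
    calc l ^ q₀ ≤ (D * l') ^ q₀ := Real.rpow_le_rpow hlpos.le hlD hq₀
      _ = D ^ q₀ * l' ^ q₀ := Real.mul_rpow (by linarith) hl'pos.le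
  have h3 : l ^ (q - q₀) ≤ c ^ (q - q₀) :=
    Real.rpow_le_rpow hlpos.le hlc (by linarith)
  have hsplit : l ^ q = l ^ q₀ * l ^ (q - q₀) := by
    rw [← Real.rpow_add hlpos]; ring_nf
  show t ^ p * l ^ q ≤ _
  calc t ^ p * l ^ q = t ^ p * l ^ q₀ * l ^ (q - q₀) := by rw [hsplit]; ring
    _ ≤ (K ^ p * t' ^ p) * (D ^ q₀ * l' ^ q₀) * (c ^ (q - q₀)) := by
        apply mul_le_mul _ h3 (Real.rpow_nonneg hlpos.le _)
        · positivity
        · apply mul_le_mul h1 h2 (Real.rpow_nonneg hlpos.le _)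
          positivity
    _ = (K ^ p * D ^ q₀ * c ^ (q - q₀)) * (t' ^ p * l' ^ q₀) := by ring

theorem stmt2 {X : Type*} [MeasurableSpace X] (μ : Measure X) (f : X → ℝ)
    (hf : Measurable f) (p q₀ : ℝ) (hp : 1 ≤ p) (hq₀ : 0 < q₀)
    (h0 : 0 < eLpNormEssSup f μ) (hinf : eLpNormEssSup f μ < ∞)
    (hfin : luxNorm μ (Bpq p q₀) f < ∞) :
    Filter.limsup (fun q : ℝ => luxNorm μ (Bpq p q) f) atTop ≤ eLpNormEssSup f μ := by
  set S := eLpNormEssSup f μ with hS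
  -- get a witness for the finiteness of the q₀-norm
  have hne : {lam : ℝ≥0∞ | 0 < lam ∧ lam ≠ ∞ ∧
      ∫⁻ x, ENNReal.ofReal (Bpq p q₀ (|f x| / lam.toReal)) ∂μ ≤ 1}.Nonempty := by
    by_contra h
    rw [Set.not_nonempty_iff_eq_empty] at h
    rw [luxNorm, h] at hfin
    simp at hfin
  obtain ⟨lam₀, hlam₀pos, hlam₀top, hlam₀int⟩ := hne
  have hl0 : 0 < lam₀.toReal := ENNReal.toReal_pos (ne_of_gt hlam₀pos) hlam₀top
  refine ENNReal.le_of_forall_pos_le_add fun ε hε _ => ?_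
  set L := S + (ε : ℝ≥0∞) with hLdef
  have hLtop : L ≠ ∞ := by
    simp [hLdef, ENNReal.add_ne_top, hinf.ne]
  have hSL : S < L := ENNReal.lt_add_right hinf.ne (by exact_mod_cast hε.ne')
  have hLr : 0 < L.toReal := ENNReal.toReal_pos (ne_of_gt (lt_of_lt_of_le h0 hSL.le)) hLtop
  set Lr := L.toReal with hLrdef
  set l0 := lam₀.toReal with hl0def
  set r := S.toReal / Lr with hrdef
  have hr0 : 0 ≤ r := div_nonneg ENNReal.toReal_nonneg hLr.le
  have hr1 : r < 1 := by
    rw [hrdef, div_lt_one hLr]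
    exact (ENNReal.toReal_lt_toReal hinf.ne hLtop).mpr hSL
  set c := Real.log (e0 + r) with hcdef
  have he0 : 1 < e0 := e0_gt_one
  have hc1 : c < 1 := by
    have : Real.log (e0 + r) < Real.log (Real.exp 1) := by
      apply Real.log_lt_log (by linarith)
      unfold e0; linarith
    rwa [Real.log_exp] at this
  have hc0 : 0 < c := Real.log_pos (by linarith)
  set K := max 1 (l0 / Lr) with hKdef
  have hK1 : 1 ≤ K := le_max_left _ _
  set M := K ^ p * (1 + Real.log K / Real.log e0) ^ q₀ with hMdef
  have hM0 : 0 ≤ M := by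
    have hKpos : (0:ℝ) < K := lt_of_lt_of_le one_pos hK1
    exact mul_nonneg (Real.rpow_nonneg hKpos.le _) (Real.rpow_nonneg
      (by have h1 : 0 ≤ Real.log K := Real.log_nonneg hK1
          have h2 : 0 < Real.log e0 := Real.log_pos e0_gt_one
          positivity) _)
  -- M * c ^ (q - q₀) → 0
  have htend : Tendsto (fun q : ℝ => M * c ^ (q - q₀)) atTop (𝓝 0) := by
    have h1 : Tendsto (fun q : ℝ => c ^ q) atTop (𝓝 0) :=
      tendsto_rpow_atTop_of_base_lt_one c (by linarith) hc1
    have h2 : Tendsto (fun q : ℝ => q - q₀) atTop atTop := by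
      simpa [sub_eq_add_neg] using
        tendsto_atTop_add_const_right atTop (-q₀) (tendsto_id (α := ℝ))
    have h3 := (h1.comp h2).const_mul M
    simpa using h3
  have hev : ∀ᶠ q : ℝ in atTop, luxNorm μ (Bpq p q) f ≤ L := by
    filter_upwards [eventually_ge_atTop q₀, htend.eventually_lt_const one_pos]
      with q hqq hMc
    have hMc' : M * c ^ (q - q₀) ≤ 1 := hMc.le
    apply sInf_le
    refine ⟨lt_of_lt_of_le h0 hSL.le, hLtop, ?_⟩
    -- pointwise a.e. bound
    have hae : ∀ᵐ x ∂μ, ENNReal.ofReal (Bpq p q (|f x| / Lr)) ≤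
        ENNReal.ofReal (M * c ^ (q - q₀)) *
          ENNReal.ofReal (Bpq p q₀ (|f x| / l0)) := by
      filter_upwards [ae_le_eLpNormEssSup (f := f) (μ := μ)] with x hx
      have hfx : |f x| ≤ S.toReal := by
        have := ENNReal.toReal_mono hinf.ne hx
        simpa using this
      have hfx0 : 0 ≤ |f x| := abs_nonneg _
      set t := |f x| / Lr with htdef
      set t' := |f x| / l0 with ht'def
      have ht0 : 0 ≤ t := div_nonneg hfx0 hLr.le
      have ht'0 : 0 ≤ t' := div_nonneg hfx0 hl0.le
      have htr : t ≤ r := by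
        rw [htdef, hrdef]
        gcongr
      have hlc : Real.log (e0 + t) ≤ c :=
        Real.log_le_log (by linarith) (by linarith)
      have htt' : t ≤ K * t' := by
        have : t = (l0 / Lr) * t' := by
          rw [htdef, ht'def]; field_simp
        rw [this]
        exact mul_le_mul_of_nonneg_right (le_max_right _ _) ht'0
      have hkey := Bpq_key (by linarith : (0:ℝ) ≤ p) hq₀.le hqq ht0 ht'0 hK1 htt' hlc
      calc ENNReal.ofReal (Bpq p q t)
          ≤ ENNReal.ofReal ((M * c ^ (q - q₀)) * Bpq p q₀ t') := by
            apply ENNReal.ofReal_le_ofReal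
            calc Bpq p q t ≤ (K ^ p * (1 + Real.log K / Real.log e0) ^ q₀ *
                c ^ (q - q₀)) * Bpq p q₀ t' := hkey
              _ = (M * c ^ (q - q₀)) * Bpq p q₀ t' := by rw [hMdef]
        _ = ENNReal.ofReal (M * c ^ (q - q₀)) * ENNReal.ofReal (Bpq p q₀ t') := by
            rw [ENNReal.ofReal_mul (by positivity)]
    calc ∫⁻ x, ENNReal.ofReal (Bpq p q (|f x| / L.toReal)) ∂μ
        ≤ ∫⁻ x, ENNReal.ofReal (M * c ^ (q - q₀)) *
            ENNReal.ofReal (Bpq p q₀ (|f x| / l0)) ∂μ := lintegral_mono_ae hae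
      _ = ENNReal.ofReal (M * c ^ (q - q₀)) *
            ∫⁻ x, ENNReal.ofReal (Bpq p q₀ (|f x| / l0)) ∂μ :=
          lintegral_const_mul' _ _ ENNReal.ofReal_ne_top
      _ ≤ ENNReal.ofReal (M * c ^ (q - q₀)) * 1 := by
          exact mul_le_mul_right hlam₀int _
      _ ≤ 1 := by
          rw [mul_one]
          exact ENNReal.ofReal_le_one.mpr hMc'
  exact limsup_le_of_le (by isBoundedDefault) hev
end
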